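/- Let c = (c_1,…,c_k) be a composition of size n and let P_c be the associated poset on n+1 elements with minimum-chain element p_0. For 0 ≤ q ≤ 1, consider the slice S_q = { x ∈ ℝ^{P_c∖{p_0}} : 0 ≤ x_a ≤ x_b ≤ 1 whenever a ≤ b in P_c, where x_{p_0} is interpreted as the constant q } of the order polytope of P_c. Then the n-dimensional Lebesgue measure of S_q equals g_c(q) / ((c_1−1)!⋯(c_k−1)!). -/

import Mathlib

open MeasureTheory

/-- Iterated integral defining the composition polynomial, peeling off the
outermost variable first (so the list argument is the reversed composition). -/
noncomputable def gAux : List ℕ → ℝ → ℝ → ℝ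
  | [], _, _ => 1
  | a :: rest, q, u => ∫ t in q..u, t ^ (a - 1) * gAux rest q t

/-- The composition polynomial
`g_c(q) = ∫_q^1 ∫_q^{t_k} ⋯ ∫_q^{t_2} t_1^{c_1-1} ⋯ t_k^{c_k-1} dt_1 ⋯ dt_k`. -/
noncomputable def gcomp (c : List ℕ) (q : ℝ) : ℝ := gAux c.reverse q 1

/-- For the composition `c` with parts `c_i = d i + 1`, the elements of the
poset `P_c` other than `p_0` are the pairs `⟨i, r⟩` with `i : Fin k` and
`r : Fin (c_i)`: the element `⟨i, d i⟩` is `p_i`, and the elements `⟨i, r⟩`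
with `r < d i` form the extra chain of `c_i − 1` elements below `p_i`.
`posetLe d x y` is the order relation of `P_c` restricted to these elements:
`x ≤ y` iff they are in the same block and `x` is below `y` in its chain, or
`x` is in an earlier block than `y` and `y` is some `p_j`. -/
def posetLe {k : ℕ} (d : Fin k → ℕ) (x y : (i : Fin k) × Fin (d i + 1)) : Prop :=
  (x.1 = y.1 ∧ (x.2 : ℕ) ≤ (y.2 : ℕ)) ∨ (x.1 < y.1 ∧ (y.2 : ℕ) = d y.1)

/-!
Cut `P_c ∖ {p_0}` into the block `{p_k}` ∪ (the chain below `p_k`) and the rest. Once the value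
`t = x_{p_k}` is fixed, the chain below `p_k` ranges over the simplex
`0 ≤ y_1 ≤ ⋯ ≤ y_{c_k - 1} ≤ t`, of volume `t ^ (c_k - 1) / (c_k - 1)!`, and the other blocks range
over the slice for `(c_1, …, c_{k-1})` with `t` in place of the upper bound `1`. By Fubini, the
volume of the slice with upper bound `u` therefore satisfies the recursion that defines `g_c` as an
iterated integral, with `t` integrated over `[q, u]`.
-/

open Set
open scoped ENNReal Nat

namespace MeasureTheory.MeasurePreserving

variable {α β γ : Type*} [MeasurableSpace α] [MeasurableSpace β] [MeasurableSpace γ]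
  {μ : Measure α} {ν : Measure β} {ρ : Measure γ} [SFinite ν] {Φ : α × β → γ}
  {S : Set γ} {A : Set α} {T : α → Set β}

theorem setLIntegral_eq_setLIntegral_fiber (hΦ : MeasurePreserving Φ (μ.prod ν) ρ)
    (hS : MeasurableSet S) (hA : MeasurableSet A) (hmem : ∀ a b, Φ (a, b) ∈ S ↔ a ∈ A ∧ b ∈ T a)
    {f : γ → ℝ≥0∞} (hf : Measurable f) :
    ∫⁻ c in S, f c ∂ρ = ∫⁻ a in A, ∫⁻ b in T a, f (Φ (a, b)) ∂ν ∂μ := by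
  have hS' : MeasurableSet (Φ ⁻¹' S) := hΦ.measurable hS
  rw [← hΦ.setLIntegral_comp_preimage hS hf, ← lintegral_indicator hS',
    lintegral_prod _ ((hf.comp hΦ.measurable).indicator hS' (f := fun p => f (Φ p))).aemeasurable,
    ← lintegral_indicator hA]
  refine lintegral_congr fun a => ?_
  by_cases ha : a ∈ A
  · have hT : Prod.mk a ⁻¹' (Φ ⁻¹' S) = T a := by ext b; simp [hmem, ha]
    rw [indicator_of_mem ha, ← hT, ← lintegral_indicator (measurable_prodMk_left hS')]
    rfl
  · simp [indicator, hmem, ha]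

theorem measure_eq_setLIntegral_fiber (hΦ : MeasurePreserving Φ (μ.prod ν) ρ)
    (hS : MeasurableSet S) (hA : MeasurableSet A) (hmem : ∀ a b, Φ (a, b) ∈ S ↔ a ∈ A ∧ b ∈ T a) :
    ρ S = ∫⁻ a in A, ν (T a) ∂μ := by
  simpa using hΦ.setLIntegral_eq_setLIntegral_fiber hS hA hmem measurable_const (f := 1)

end MeasureTheory.MeasurePreserving

theorem Fin.monotone_iff_castSucc {α : Type*} [Preorder α] {n : ℕ} {f : Fin (n + 1) → α} :
    Monotone f ↔ Monotone (f ∘ Fin.castSucc) ∧ ∀ i : Fin n, f i.castSucc ≤ f (Fin.last n) := by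
  refine ⟨fun hf => ⟨hf.comp fun _ _ h => Fin.castSucc_le_castSucc_iff.2 h,
    fun i => hf (Fin.le_last _)⟩, fun ⟨hinit, hlast⟩ a b hab => ?_⟩
  induction b using Fin.lastCases with
  | last =>
    induction a using Fin.lastCases with
    | last => exact le_rfl
    | cast i => exact hlast i
  | cast j =>
    induction a using Fin.lastCases with
    | last => exact absurd hab (not_le.2 (Fin.castSucc_lt_last j))
    | cast i => exact hinit (Fin.castSucc_le_castSucc_iff.1 hab)

theorem Fin.monotone_snoc_iff {α : Type*} [Preorder α] {n : ℕ} {z : Fin n → α} {t : α} :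
    Monotone (Fin.snoc z t : Fin (n + 1) → α) ↔ Monotone z ∧ ∀ i, z i ≤ t := by
  simp [Fin.monotone_iff_castSucc, Fin.snoc_comp_castSucc]

theorem setLIntegral_Icc_ofReal {a b : ℝ} (hab : a ≤ b) {f : ℝ → ℝ}
    (hf : ContinuousOn f (Icc a b)) (hf0 : ∀ x ∈ Icc a b, 0 ≤ f x) :
    ∫⁻ t in Icc a b, ENNReal.ofReal (f t) = ENNReal.ofReal (∫ t in a..b, f t) := by
  rw [intervalIntegral.integral_of_le hab, ← integral_Icc_eq_integral_Ioc,
    ofReal_integral_eq_lintegral_ofReal hf.integrableOn_Icc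
      ((ae_restrict_iff' measurableSet_Icc).2 (Filter.Eventually.of_forall hf0))]

theorem measurePreserving_snoc {α : Type*} [MeasureSpace α] [SigmaFinite (volume : Measure α)]
    (n : ℕ) :
    MeasurePreserving (fun p : α × (Fin n → α) => (Fin.snoc p.2 p.1 : Fin (n + 1) → α))
      (volume.prod volume) volume := by
  have h := (volume_preserving_piFinSuccAbove (fun _ : Fin (n + 1) => α) (Fin.last n)).symm
  have hsnoc : ⇑(MeasurableEquiv.piFinSuccAbove (fun _ : Fin (n + 1) => α) (Fin.last n)).symm =
      fun p => Fin.snoc p.2 p.1 := by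
    funext p
    simp [Fin.snocEquiv]
  rwa [hsnoc] at h

def Fin.sigmaSnocEquiv {k : ℕ} (κ : Fin (k + 1) → Type*) :
    κ (Fin.last k) ⊕ ((j : Fin k) × κ j.castSucc) ≃ (i : Fin (k + 1)) × κ i where
  toFun := Sum.elim (Sigma.mk (Fin.last k)) fun p => ⟨p.1.castSucc, p.2⟩
  invFun p := Fin.lastCases (motive := fun i => κ i → κ (Fin.last k) ⊕ ((j : Fin k) × κ j.castSucc))
    Sum.inl (fun j r => Sum.inr ⟨j, r⟩) p.1 p.2
  left_inv := by rintro (r | ⟨j, r⟩) <;> simp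
  right_inv := by
    rintro ⟨i, r⟩
    induction i using Fin.lastCases <;> simp

section SigmaSnoc

variable {k : ℕ} {κ : Fin (k + 1) → Type*} {α : Type*}

def sigmaSnoc (y : κ (Fin.last k) → α) (z : ((j : Fin k) × κ j.castSucc) → α) :
    ((i : Fin (k + 1)) × κ i) → α :=
  fun p => Fin.lastCases (motive := fun i => κ i → α) y (fun j r => z ⟨j, r⟩) p.1 p.2

@[simp]
theorem sigmaSnoc_last (y : κ (Fin.last k) → α) (z : ((j : Fin k) × κ j.castSucc) → α)
    (r : κ (Fin.last k)) : sigmaSnoc y z ⟨Fin.last k, r⟩ = y r := by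
  simp [sigmaSnoc]

@[simp]
theorem sigmaSnoc_castSucc (y : κ (Fin.last k) → α) (z : ((j : Fin k) × κ j.castSucc) → α)
    (j : Fin k) (r : κ j.castSucc) : sigmaSnoc y z ⟨j.castSucc, r⟩ = z ⟨j, r⟩ := by
  simp [sigmaSnoc]

theorem measurePreserving_sigmaSnoc [∀ i, Fintype (κ i)] [MeasureSpace α]
    [SigmaFinite (volume : Measure α)] :
    MeasurePreserving (fun p : (κ (Fin.last k) → α) × (((j : Fin k) × κ j.castSucc) → α) =>
      sigmaSnoc p.1 p.2) (volume.prod volume) volume := by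
  have h := (volume_measurePreserving_piCongrLeft (fun _ => α) (Fin.sigmaSnocEquiv κ)).comp
    (volume_measurePreserving_sumPiEquivProdPi_symm (fun _ => α))
  have hΨ : ⇑(MeasurableEquiv.piCongrLeft (fun _ => α) (Fin.sigmaSnocEquiv κ)) ∘
      ⇑(MeasurableEquiv.sumPiEquivProdPi fun _ => α).symm = fun p => sigmaSnoc p.1 p.2 := by
    funext p
    funext ⟨i, r⟩
    induction i using Fin.lastCases with
    | last =>
      rw [sigmaSnoc_last]
      exact Equiv.piCongrLeft_sumInl (fun _ => α) (Fin.sigmaSnocEquiv κ) p.1 p.2 r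
    | cast j =>
      rw [sigmaSnoc_castSucc]
      exact Equiv.piCongrLeft_sumInr (fun _ => α) (Fin.sigmaSnocEquiv κ) p.1 p.2 ⟨j, r⟩
  rwa [hΨ] at h

end SigmaSnoc

def orderSimplex (n : ℕ) (s : ℝ) : Set (Fin n → ℝ) := {z | Monotone z ∧ ∀ i, z i ∈ Icc 0 s}

theorem isClosed_orderSimplex (n : ℕ) (s : ℝ) : IsClosed (orderSimplex n s) := by
  simp only [orderSimplex, ofPred_and, ofPred_forall]
  exact isClosed_monotone.inter
    (isClosed_iInter fun i => isClosed_Icc.preimage (continuous_apply i))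

theorem measurableSet_orderSimplex (n : ℕ) (s : ℝ) : MeasurableSet (orderSimplex n s) :=
  (isClosed_orderSimplex n s).measurableSet

theorem snoc_mem_orderSimplex_iff {n : ℕ} {s t : ℝ} {z : Fin n → ℝ} :
    (Fin.snoc z t : Fin (n + 1) → ℝ) ∈ orderSimplex (n + 1) s ↔
      t ∈ Icc 0 s ∧ z ∈ orderSimplex n t := by
  simp only [orderSimplex, mem_ofPred_eq, Fin.monotone_snoc_iff, Fin.forall_fin_succ',
    Fin.snoc_castSucc, Fin.snoc_last, mem_Icc]
  grind

theorem mem_orderSimplex_succ_iff {n : ℕ} {s : ℝ} {w : Fin (n + 1) → ℝ} :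
    w ∈ orderSimplex (n + 1) s ↔ Monotone w ∧ 0 ≤ w 0 ∧ w (Fin.last n) ≤ s := by
  refine ⟨fun ⟨hw, hI⟩ => ⟨hw, (hI 0).1, (hI _).2⟩, fun ⟨hw, h0, hs⟩ => ⟨hw, fun i => ?_⟩⟩
  exact ⟨h0.trans (hw (Fin.zero_le i)), (hw (Fin.le_last i)).trans hs⟩

theorem setLIntegral_pow_div_factorial {s : ℝ} (hs : 0 ≤ s) (n : ℕ) :
    ∫⁻ t in Icc 0 s, ENNReal.ofReal (t ^ n / n !) = ENNReal.ofReal (s ^ (n + 1) / (n + 1)!) := by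
  rw [setLIntegral_Icc_ofReal hs (by fun_prop) fun t ht => by have := ht.1; positivity,
    intervalIntegral.integral_div, integral_pow, Nat.factorial_succ]
  push_cast
  congr 1
  field_simp
  ring

theorem volume_orderSimplex (n : ℕ) {s : ℝ} (hs : 0 ≤ s) :
    volume (orderSimplex n s) = ENNReal.ofReal (s ^ n / n !) := by
  induction n generalizing s with
  | zero =>
    rw [show orderSimplex 0 s = univ from
      eq_univ_of_forall fun z => ⟨fun a => a.elim0, fun a => a.elim0⟩, volume_pi, Measure.pi_univ]
    simp
  | succ n ih =>
    rw [(measurePreserving_snoc n).measure_eq_setLIntegral_fiber (measurableSet_orderSimplex _ s)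
      measurableSet_Icc fun t z => snoc_mem_orderSimplex_iff,
      setLIntegral_congr_fun measurableSet_Icc fun t ht => ih ht.1,
      setLIntegral_pow_div_factorial hs]

theorem setLIntegral_orderSimplex_last (n : ℕ) {q u : ℝ} (hq : 0 ≤ q) {G : ℝ → ℝ≥0∞}
    (hG : Measurable G) :
    ∫⁻ y in {y ∈ orderSimplex (n + 1) u | q ≤ y (Fin.last n)}, G (y (Fin.last n)) =
      ∫⁻ t in Icc q u, G t * ENNReal.ofReal (t ^ n / n !) := by
  have hmem (t : ℝ) (z : Fin n → ℝ) :
      (Fin.snoc z t : Fin (n + 1) → ℝ) ∈ {y ∈ orderSimplex (n + 1) u | q ≤ y (Fin.last n)} ↔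
        t ∈ Icc q u ∧ z ∈ orderSimplex n t := by
    simp only [mem_ofPred_eq, snoc_mem_orderSimplex_iff, Fin.snoc_last, mem_Icc]
    grind
  have hS : MeasurableSet {y ∈ orderSimplex (n + 1) u | q ≤ y (Fin.last n)} :=
    (measurableSet_orderSimplex _ u).inter
      (measurableSet_le measurable_const (measurable_pi_apply _))
  rw [(measurePreserving_snoc n).setLIntegral_eq_setLIntegral_fiber hS measurableSet_Icc hmem
    (f := fun y => G (y (Fin.last n))) (hG.comp (measurable_pi_apply _))]
  refine setLIntegral_congr_fun measurableSet_Icc fun t ht => ?_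
  simp only [Fin.snoc_last, setLIntegral_const, volume_orderSimplex n (hq.trans ht.1)]

theorem continuous_gAux (l : List ℕ) (q : ℝ) : Continuous (gAux l q) := by
  induction l with
  | nil => exact continuous_const
  | cons a rest ih =>
    exact intervalIntegral.continuous_primitive
      (fun _ _ => ((continuous_pow _).mul ih).intervalIntegrable _ _) q

theorem gAux_nonneg (l : List ℕ) {q u : ℝ} (hq : 0 ≤ q) (hqu : q ≤ u) : 0 ≤ gAux l q u := by
  induction l generalizing u with
  | nil => exact zero_le_one
  | cons a rest ih =>
    exact intervalIntegral.integral_nonneg hqu fun t ht =>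
      mul_nonneg (pow_nonneg (hq.trans ht.1) _) (ih ht.1)

theorem gAux_reverse_ofFn_succ_div_prod {k : ℕ} (d : Fin (k + 1) → ℕ) (q u : ℝ) :
    gAux (List.ofFn fun i => d i + 1).reverse q u / ∏ i, ((d i)! : ℝ) =
      ∫ t in q..u, gAux (List.ofFn fun j : Fin k => d j.castSucc + 1).reverse q t /
        (∏ j : Fin k, ((d j.castSucc)! : ℝ)) * (t ^ d (Fin.last k) / (d (Fin.last k))!) := by
  rw [List.ofFn_succ', List.concat_eq_append, List.reverse_append, List.reverse_singleton,
    List.singleton_append, gAux, Fin.prod_univ_castSucc, ← intervalIntegral.integral_div]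
  refine intervalIntegral.integral_congr fun t _ => ?_
  simp only [add_tsub_cancel_right]
  ring

-- The slice of the theorem with `u` in place of `1`, described block by block (see
-- `mem_blockSlice_iff`).
def blockSlice {k : ℕ} (d : Fin k → ℕ) (q u : ℝ) : Set (((i : Fin k) × Fin (d i + 1)) → ℝ) :=
  {x | (∀ i, (fun r => x ⟨i, r⟩) ∈ orderSimplex (d i + 1) u ∧ q ≤ x ⟨i, Fin.last (d i)⟩) ∧
    Monotone fun i => x ⟨i, Fin.last (d i)⟩}

theorem isClosed_blockSlice {k : ℕ} (d : Fin k → ℕ) (q u : ℝ) : IsClosed (blockSlice d q u) := by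
  have htops : Continuous fun (x : ((i : Fin k) × Fin (d i + 1)) → ℝ) (i : Fin k) =>
      x ⟨i, Fin.last (d i)⟩ := by fun_prop
  simp only [blockSlice, ofPred_and, ofPred_forall]
  exact (isClosed_iInter fun i => ((isClosed_orderSimplex _ u).preimage (by fun_prop)).inter
    (isClosed_le continuous_const (continuous_apply _))).inter (isClosed_monotone.preimage htops)

theorem sigmaSnoc_mem_blockSlice_iff {k : ℕ} {d : Fin (k + 1) → ℕ} {q u : ℝ}
    {y : Fin (d (Fin.last k) + 1) → ℝ} {z : ((j : Fin k) × Fin (d j.castSucc + 1)) → ℝ} :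
    sigmaSnoc y z ∈ blockSlice d q u ↔
      y ∈ {y ∈ orderSimplex (d (Fin.last k) + 1) u | q ≤ y (Fin.last _)} ∧
        z ∈ blockSlice (fun j => d j.castSucc) q (y (Fin.last _)) := by
  simp only [blockSlice, mem_ofPred_eq, Fin.forall_fin_succ', Fin.monotone_iff_castSucc,
    sigmaSnoc_last, sigmaSnoc_castSucc, mem_orderSimplex_succ_iff, Function.comp_def]
  grind

theorem mem_blockSlice_iff {k : ℕ} {d : Fin k → ℕ} {q u : ℝ}
    {x : ((i : Fin k) × Fin (d i + 1)) → ℝ} :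
    x ∈ blockSlice d q u ↔
      (∀ a, 0 ≤ x a ∧ x a ≤ u) ∧ (∀ a b, posetLe d a b → x a ≤ x b) ∧
        ∀ i : Fin k, q ≤ x ⟨i, Fin.last (d i)⟩ := by
  constructor
  · rintro ⟨hblock, htop⟩
    refine ⟨fun ⟨i, r⟩ => (hblock i).1.2 r, ?_, fun i => (hblock i).2⟩
    rintro ⟨i, r⟩ ⟨j, s⟩ (⟨rfl, hrs⟩ | ⟨hij, hs⟩)
    · exact (hblock i).1.1 hrs
    · obtain rfl : s = Fin.last (d j) := Fin.ext hs
      exact ((hblock i).1.1 (Fin.le_last r)).trans (htop hij.le)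
  · rintro ⟨hbound, hle, htop⟩
    refine ⟨fun i => ⟨⟨fun r s hrs => hle _ _ (Or.inl ⟨rfl, hrs⟩), fun r => hbound _⟩, htop i⟩,
      fun i j hij => ?_⟩
    rcases hij.eq_or_lt with rfl | hij
    · exact le_rfl
    · exact hle _ _ (Or.inr ⟨hij, rfl⟩)

theorem volume_blockSlice {k : ℕ} (d : Fin k → ℕ) {q u : ℝ} (hq : 0 ≤ q) (hqu : q ≤ u) :
    volume (blockSlice d q u) = ENNReal.ofReal
      (gAux (List.ofFn fun i => d i + 1).reverse q u / ∏ i, ((d i)! : ℝ)) := by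
  induction k generalizing u with
  | zero =>
    rw [show blockSlice d q u = univ from
      eq_univ_of_forall fun x => ⟨fun i => i.elim0, fun i => i.elim0⟩, volume_pi, Measure.pi_univ]
    simp [gAux]
  | succ k ih =>
    set m := d (Fin.last k)
    set d' : Fin k → ℕ := fun j => d j.castSucc
    set F : ℝ → ℝ := fun t => gAux (List.ofFn fun j => d' j + 1).reverse q t / ∏ j, ((d' j)! : ℝ)
    have hF : ∀ t ∈ Icc q u, 0 ≤ F t := fun t ht =>
      div_nonneg (gAux_nonneg _ hq ht.1) (Finset.prod_nonneg fun j _ => by positivity)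
    have hA : MeasurableSet {y ∈ orderSimplex (m + 1) u | q ≤ y (Fin.last m)} :=
      (measurableSet_orderSimplex _ u).inter
        (measurableSet_le measurable_const (measurable_pi_apply _))
    calc volume (blockSlice d q u)
        = ∫⁻ y in {y ∈ orderSimplex (m + 1) u | q ≤ y (Fin.last m)},
            volume (blockSlice d' q (y (Fin.last m))) :=
          measurePreserving_sigmaSnoc.measure_eq_setLIntegral_fiber
            (isClosed_blockSlice d q u).measurableSet hA fun _ _ => sigmaSnoc_mem_blockSlice_iff
      _ = ∫⁻ y in {y ∈ orderSimplex (m + 1) u | q ≤ y (Fin.last m)},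
            ENNReal.ofReal (F (y (Fin.last m))) :=
          setLIntegral_congr_fun hA fun y hy => ih d' hy.2
      _ = ∫⁻ t in Icc q u, ENNReal.ofReal (F t) * ENNReal.ofReal (t ^ m / m !) :=
          setLIntegral_orderSimplex_last m hq
            ((continuous_gAux _ q).div_const _).measurable.ennreal_ofReal
      _ = ENNReal.ofReal (∫ t in q..u, F t * (t ^ m / m !)) := by
          have hFc : Continuous F := (continuous_gAux _ q).div_const _
          rw [← setLIntegral_Icc_ofReal hqu (by fun_prop) fun t ht => ?_]
          · refine setLIntegral_congr_fun measurableSet_Icc fun t ht => ?_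
            rw [ENNReal.ofReal_mul (hF t ht)]
          · exact mul_nonneg (hF t ht) (by have := hq.trans ht.1; positivity)
      _ = _ := by rw [gAux_reverse_ofFn_succ_div_prod]

/-- Theorem: for the composition `c = (d 1 + 1, …, d k + 1)` of size
`n = Σ (d i + 1)`, the slice of the order polytope of `P_c` at `x_{p_0} = q`
(described in the coordinates indexed by `P_c ∖ {p_0}`: the cube constraints,
the order constraints among elements other than `p_0`, and the constraints
`q ≤ x_{p_i}` coming from `p_0 ≤ p_i`) has `n`-dimensional Lebesgue measure
`g_c(q) / ((c_1 − 1)! ⋯ (c_k − 1)!)`. -/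
theorem order_polytope_slice_volume {k : ℕ} (d : Fin k → ℕ) (q : ℝ)
    (hq0 : 0 ≤ q) (hq1 : q ≤ 1) :
    volume {x : ((i : Fin k) × Fin (d i + 1)) → ℝ |
        (∀ a, 0 ≤ x a ∧ x a ≤ 1) ∧
        (∀ a b, posetLe d a b → x a ≤ x b) ∧
        (∀ i : Fin k, q ≤ x ⟨i, Fin.last (d i)⟩)} =
      ENNReal.ofReal
        (gcomp (List.ofFn fun i => d i + 1) q / ∏ i, (Nat.factorial (d i) : ℝ)) := by
  rw [gcomp]
  convert volume_blockSlice d hq0 hq1 using 2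
  ext x
  exact mem_blockSlice_iff.symm
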